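/- arXiv:math/0601772 — 3 statements merged into one kernel-verified Lean document; each statement's English description precedes it below -/
import Mathlib

section
/- Let A be a commutative associative algebra over a field of characteristic zero and p : A × A → A a skew-symmetric bilinear map satisfying the Hochschild cocycle condition a·p(b,c) − p(a·b, c) + p(a, b·c) − p(a,b)·c = 0 for all a,b,c. Then p is a derivation in each argument: p(a·b, c) = a·p(b,c) + b·p(a,c) for all a,b,c ∈ A. -/
theorem isUnit_two_of_algebra_charZero (k : Type*) {A : Type*} [Field k] [CharZero k] [Semiring A]
    [Algebra k A] : IsUnit (2 : A) := by
  rw [← map_ofNat (algebraMap k A) 2]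
  exact (isUnit_of_invertible (2 : k)).map (algebraMap k A)

/- The cocycle identity at (a,c,b), minus those at (a,b,c) and (b,a,c): by skew-symmetry and
commutativity everything cancels except twice the Leibniz defect of p(ab, c). -/
theorem two_mul_apply_mul_of_skew_of_cocycle {A : Type*} [CommRing A] (p : A → A → A)
    (hskew : ∀ a b : A, p a b = - p b a)
    (hcocycle : ∀ a b c : A, a * p b c - p (a * b) c + p a (b * c) - p a b * c = 0)
    (a b c : A) : 2 * p (a * b) c = 2 * (a * p b c + b * p a c) := by
  have hbac := hcocycle b a c
  have hacb := hcocycle a c b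
  rw [mul_comm b a, hskew b a] at hbac
  rw [mul_comm c b, hskew c b, hskew (a * c) b] at hacb
  linear_combination hacb - hcocycle a b c - hbac

/-- a skew-symmetric Hochschild 2-cocycle on a commutative algebra
over a field of characteristic zero is a derivation in each argument. -/
theorem skew_cocycle_is_biderivation
    {k A : Type*} [Field k] [CharZero k] [CommRing A] [Algebra k A]
    (p : A →ₗ[k] A →ₗ[k] A)
    (hskew : ∀ a b : A, p a b = - p b a)
    (hcocycle : ∀ a b c : A, a * p b c - p (a * b) c + p a (b * c) - p a b * c = 0) :
    ∀ a b c : A, p (a * b) c = a * p b c + b * p a c := fun a b c =>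
  (isUnit_two_of_algebra_charZero k).mul_left_cancel
    (two_mul_apply_mul_of_skew_of_cocycle (fun x y => p x y) hskew hcocycle a b c)
end

section
/- Let R = k[x₁,x₂,x₃], f ∈ R, and e ∈ R. If P_f denotes the Jacobian bracket J(f,·,·), then the scaled bracket e·P_f also satisfies the Jacobi identity: e·P_f(e·P_f(a,b),c) + e·P_f(e·P_f(b,c),a) + e·P_f(e·P_f(c,a),b) = 0 for all a,b,c ∈ R. -/
open MvPolynomial

lemma my_pderiv_comm {σ : Type*} {R : Type*} [CommSemiring R] (i j : σ) (p : MvPolynomial σ R) :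
    pderiv i (pderiv j p) = pderiv j (pderiv i p) := by
  classical
  induction p using MvPolynomial.induction_on' with
  | add p q hp hq => simp [hp, hq]
  | monomial s a =>
    rcases eq_or_ne i j with rfl | hij
    · rfl
    simp only [pderiv_monomial]
    rw [tsub_right_comm]
    congr 1
    rw [Finsupp.tsub_apply, Finsupp.tsub_apply, Finsupp.single_eq_of_ne hij,
      Finsupp.single_eq_of_ne hij.symm]
    simp only [Nat.sub_zero]
    ring

lemma pd10 {k : Type*} [CommRing k] (p : MvPolynomial (Fin 3) k) :
    pderiv 1 (pderiv 0 p) = pderiv 0 (pderiv 1 p) := my_pderiv_comm 1 0 p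
lemma pd20 {k : Type*} [CommRing k] (p : MvPolynomial (Fin 3) k) :
    pderiv 2 (pderiv 0 p) = pderiv 0 (pderiv 2 p) := my_pderiv_comm 2 0 p
lemma pd21 {k : Type*} [CommRing k] (p : MvPolynomial (Fin 3) k) :
    pderiv 2 (pderiv 1 p) = pderiv 1 (pderiv 2 p) := my_pderiv_comm 2 1 p

/-- The Jacobian bracket `P_f(a,b) = J(f,a,b)` on `k[x₁,x₂,x₃]`. -/
noncomputable def jacBracket {k : Type*} [CommRing k]
    (f a b : MvPolynomial (Fin 3) k) : MvPolynomial (Fin 3) k :=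
  Matrix.det !![pderiv 0 f, pderiv 1 f, pderiv 2 f;
                pderiv 0 a, pderiv 1 a, pderiv 2 a;
                pderiv 0 b, pderiv 1 b, pderiv 2 b]

/-- on `R = k[x₁,x₂,x₃]` over a field of characteristic zero, the
scaled Jacobian bracket `e·P_f` also satisfies the Jacobi identity. -/
theorem scaled_jacBracket_jacobi
    {k : Type*} [Field k] [CharZero k] (f e : MvPolynomial (Fin 3) k) :
    ∀ a b c : MvPolynomial (Fin 3) k,
      e * jacBracket f (e * jacBracket f a b) c
        + e * jacBracket f (e * jacBracket f b c) a
        + e * jacBracket f (e * jacBracket f c a) b = 0 := by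
  intro a b c
  simp only [jacBracket, Matrix.det_fin_three, Matrix.of_apply, Matrix.cons_val', Matrix.cons_val_zero,
    Matrix.cons_val_one, Matrix.head_cons, Matrix.empty_val', Matrix.cons_val_fin_one,
    Matrix.head_fin_const, Matrix.cons_val_two, Matrix.tail_cons]
  simp only [pderiv_mul, map_add, map_sub]
  simp only [pd10, pd20, pd21]
  ring
end

section
/- Let f = f₄ be a homogeneous polynomial of degree 4 in variables z₀,z₁,z₂,z₃ (so Σ zⱼ∂ⱼf = 4f), and let a,b be functions satisfying the Euler relations Σ zⱼ∂ⱼa = 0, Σ zⱼ∂ⱼb = 0 (e.g. homogeneous rational functions of degree 0). For a permutation (i,j,k,l) of (0,1,2,3) with sign ε_{ijkl}, define p_{ijk}(a,b) = ε_{ijkl}·z_l^{-1}·det[[∂ᵢf,∂ⱼf,∂ₖf],[∂ᵢa,∂ⱼa,∂ₖa],[∂ᵢb,∂ⱼb,∂ₖb]]. Then on the locus f = 0, z_k ≠ 0, z_l ≠ 0, one has p_{ijk}(a,b) = p_{ijl}(a,b). -/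
/-- let `R` carry four derivations `∂₀,…,∂₃` and elements
`z₀,…,z₃` with the Euler relations `Σ zⱼ∂ⱼf = 4f`, `Σ zⱼ∂ⱼa = Σ zⱼ∂ⱼb = 0`
(so `f` is "homogeneous of degree 4" and `a, b` of degree 0). For a permutation
`(i,j,k,l) = (σ0,σ1,σ2,σ3)` of `(0,1,2,3)` with sign `ε`, the brackets
`p_{ijk}(a,b) = ε·z_l⁻¹·det[[∂ᵢf,∂ⱼf,∂ₖf],[∂ᵢa,∂ⱼa,∂ₖa],[∂ᵢb,∂ⱼb,∂ₖb]]`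
agree: `p_{ijk}(a,b) = p_{ijl}(a,b)` on the locus `f = 0`, `z_k ≠ 0`, `z_l ≠ 0`.
Clearing the denominators `z_k⁻¹, z_l⁻¹`, this says precisely that
`ε·(z_k·D_{ijk} + z_l·D_{ijl})` lies in the ideal `(f)`. -/
theorem k3_bracket_charts_agree
    {k R : Type*} [CommRing k] [CommRing R] [Algebra k R]
    (d : Fin 4 → Derivation k R R) (z : Fin 4 → R) (σ : Equiv.Perm (Fin 4))
    (f a b : R)
    (hf : ∑ m : Fin 4, z m * d m f = 4 * f)
    (ha : ∑ m : Fin 4, z m * d m a = 0)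
    (hb : ∑ m : Fin 4, z m * d m b = 0) :
    ((Equiv.Perm.sign σ : ℤ) : R) *
      (z (σ 2) * Matrix.det !![d (σ 0) f, d (σ 1) f, d (σ 2) f;
                               d (σ 0) a, d (σ 1) a, d (σ 2) a;
                               d (σ 0) b, d (σ 1) b, d (σ 2) b]
        + z (σ 3) * Matrix.det !![d (σ 0) f, d (σ 1) f, d (σ 3) f;
                                  d (σ 0) a, d (σ 1) a, d (σ 3) a;
                                  d (σ 0) b, d (σ 1) b, d (σ 3) b])
      ∈ Ideal.span {f} := by
  have h4 := (Equiv.sum_comp σ fun m => z m * d m f).trans hf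
  have ha' := (Equiv.sum_comp σ fun m => z m * d m a).trans ha
  have hb' := (Equiv.sum_comp σ fun m => z m * d m b).trans hb
  simp only [Fin.sum_univ_four] at h4 ha' hb'
  rw [Ideal.mem_span_singleton]
  set ε : R := ((Equiv.Perm.sign σ : ℤ) : R)
  refine ⟨ε * 4 * (d (σ 0) a * d (σ 1) b - d (σ 1) a * d (σ 0) b), ?_⟩
  simp only [Matrix.det_fin_three, Fin.isValue, Matrix.of_apply, Matrix.cons_val',
    Matrix.cons_val_zero, Matrix.cons_val_one, Matrix.head_cons, Matrix.empty_val',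
    Matrix.cons_val_fin_one, Matrix.cons_val_two, Nat.succ_eq_add_one, Nat.reduceAdd,
    Matrix.tail_cons, Matrix.head_fin_const]
  linear_combination (ε * (d (σ 0) a * d (σ 1) b - d (σ 1) a * d (σ 0) b)) * h4
    - (ε * (d (σ 0) f * d (σ 1) b - d (σ 1) f * d (σ 0) b)) * ha'
    + (ε * (d (σ 0) f * d (σ 1) a - d (σ 1) f * d (σ 0) a)) * hb'
end
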